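/- arXiv:1311.6518 — 5 statements merged into one kernel-verified Lean document; each statement's English description precedes it below -/
import Mathlib

section
/- For positive integers t and q with 2 ≤ q, t ≤ q, and r ≥ t·2^t·ln(q), consider a random r×q binary matrix X where each entry is 1 independently with probability 1/2. Then with positive probability, for every sequence 1 ≤ j₁ < j₂ < ... < j_t ≤ q and every index 1 ≤ ℓ ≤ t, there is a row i of X such that x_{i,j_m} = 0 for all m ≠ ℓ and x_{i,j_ℓ} = 1. -/
/-!
Union bound over the `(q choose t) * t ≤ q ^ t` pairs `(j, ℓ)`. For a fixed pair, the rows whose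
restriction to the columns `j` is the indicator of `ℓ` form a `2⁻ᵗ` fraction of all rows, so all
`r` independent rows miss the pattern with probability `(1 - 2⁻ᵗ) ^ r < exp (-r 2⁻ᵗ) ≤ q⁻ᵗ`.
-/
open Function

theorem Nat.card_pow_le_card_pow_mul_card_comp_eq {ι α β : Type*} [Finite α] [Finite β]
    {j : ι → α} (hj : Injective j) (p : ι → β) :
    Nat.card β ^ Nat.card α ≤ Nat.card β ^ Nat.card ι * Nat.card {f : α → β // f ∘ j = p} := by
  classical
  have : Finite ι := Finite.of_injective j hj
  have hsplit : Nat.card α = Nat.card ι + Nat.card {a // a ∉ Set.range j} := by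
    rw [← Nat.card_range_of_injective hj, ← Nat.card_sum, Nat.card_congr (Equiv.sumCompl _)]
  let glue (g : {a // a ∉ Set.range j} → β) : {f : α → β // f ∘ j = p} :=
    ⟨fun a => if h : a ∈ Set.range j then p h.choose else g ⟨a, h⟩, by
      funext i
      have hi : ∃ i', j i' = j i := ⟨i, rfl⟩
      simp [hj hi.choose_spec]⟩
  have hglue : Injective glue := fun g₁ g₂ h => by
    funext ⟨a, ha⟩
    simpa [glue, ha] using congrFun (congrArg Subtype.val h) a
  rw [hsplit, pow_add]
  exact Nat.mul_le_mul_left _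
    (Nat.card_fun.symm.trans_le (Nat.card_le_card_of_injective glue hglue))

theorem Nat.card_subtype_forall_pi {ρ γ : Type*} [Finite ρ] (P : γ → Prop) :
    Nat.card {X : ρ → γ // ∀ i, P (X i)} = Nat.card {c // P c} ^ Nat.card ρ := by
  rw [Nat.card_congr Equiv.subtypePiEquivPi, Nat.card_fun]

theorem Nat.choose_mul_le_pow (q t : ℕ) : q.choose t * t ≤ q ^ t :=
  calc q.choose t * t ≤ q.choose t * t.factorial := Nat.mul_le_mul_left _ (Nat.self_le_factorial t)
    _ = q.descFactorial t := by rw [Nat.descFactorial_eq_factorial_mul_choose, mul_comm]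
    _ ≤ q ^ t := Nat.descFactorial_le_pow q t

theorem Nat.card_fin_orderEmbedding (t q : ℕ) : Nat.card (Fin t ↪o Fin q) = q.choose t := by
  rw [Nat.card_congr Set.powersetCard.ofFinEmbEquiv, Set.powersetCard.card, Nat.card_fin]

theorem PMF.toOuterMeasure_uniformOfFintype_pos {α : Type*} [Fintype α] [Nonempty α] {s : Set α}
    (hs : s.Nonempty) : 0 < (PMF.uniformOfFintype α).toOuterMeasure s := by
  rw [pos_iff_ne_zero, Ne, PMF.toOuterMeasure_apply_eq_zero_iff, PMF.support_uniformOfFintype,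
    Set.top_eq_univ, Set.univ_disjoint]
  exact hs.ne_empty

def Isolates {ι α : Type*} (row : α → Bool) (j : ι → α) (ℓ : ι) : Prop :=
  (∀ m, m ≠ ℓ → row (j m) = false) ∧ row (j ℓ) = true

section Isolates

variable {ι α : Type*} {j : ι → α} {ℓ : ι}

theorem isolates_iff_comp_eq [DecidableEq ι] {row : α → Bool} :
    Isolates row j ℓ ↔ row ∘ j = fun m => decide (m = ℓ) := by
  constructor
  · rintro ⟨hzero, hone⟩
    funext m
    by_cases hm : m = ℓ
    · simp [hm, hone]
    · simp [hm, hzero m hm]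
  · intro h
    exact ⟨fun m hm => by simpa [hm] using congrFun h m, by simpa using congrFun h ℓ⟩

theorem card_not_isolates_le [Finite α] (hj : Injective j) (ℓ : ι) :
    (Nat.card {row : α → Bool // ¬Isolates row j ℓ} : ℝ) ≤
      2 ^ Nat.card α * (1 - (2 ^ Nat.card ι)⁻¹) := by
  classical
  have hiso : 2 ^ Nat.card α ≤ 2 ^ Nat.card ι * Nat.card {row : α → Bool // Isolates row j ℓ} := by
    rw [Nat.card_congr (Equiv.subtypeEquivRight fun _ => isolates_iff_comp_eq)]
    simpa using Nat.card_pow_le_card_pow_mul_card_comp_eq (β := Bool) hj _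
  have hsum : Nat.card {row : α → Bool // Isolates row j ℓ} +
      Nat.card {row : α → Bool // ¬Isolates row j ℓ} = 2 ^ Nat.card α := by
    rw [← Nat.card_sum, Nat.card_congr (Equiv.sumCompl _), Nat.card_fun,
      Nat.card_eq_fintype_card (α := Bool), Fintype.card_bool]
  have hpos : (0 : ℝ) < 2 ^ Nat.card ι := by positivity
  have hiso' : (2 : ℝ) ^ Nat.card α * (2 ^ Nat.card ι)⁻¹ ≤
      Nat.card {row : α → Bool // Isolates row j ℓ} := by
    rw [← div_eq_mul_inv, div_le_iff₀ hpos, mul_comm]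
    exact_mod_cast hiso
  have hsum' : (Nat.card {row : α → Bool // Isolates row j ℓ} : ℝ) +
      Nat.card {row : α → Bool // ¬Isolates row j ℓ} = 2 ^ Nat.card α := by
    exact_mod_cast hsum
  rw [mul_one_sub]
  linarith

theorem card_forall_not_isolates_le {ρ : Type*} [Finite ρ] [Finite α] (hj : Injective j) (ℓ : ι) :
    (Nat.card {X : ρ → α → Bool // ∀ i, ¬Isolates (X i) j ℓ} : ℝ) ≤
      (2 ^ Nat.card α * (1 - (2 ^ Nat.card ι)⁻¹)) ^ Nat.card ρ := by
  rw [Nat.card_subtype_forall_pi fun row => ¬Isolates row j ℓ]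
  push_cast
  gcongr
  exact card_not_isolates_le hj ℓ

end Isolates

theorem pow_mul_one_sub_inv_two_pow_pow_lt_one {t q r : ℕ} (ht : 1 ≤ t) (hq : 2 ≤ q)
    (hr : (t : ℝ) * 2 ^ t * Real.log q ≤ r) : (q : ℝ) ^ t * (1 - (2 ^ t)⁻¹) ^ r < 1 := by
  set c : ℝ := (2 ^ t)⁻¹
  have hc : 0 < c := by positivity
  have hq0 : (0 : ℝ) < q := by positivity
  have hlog : 0 < (t : ℝ) * Real.log q :=
    mul_pos (by exact_mod_cast ht) (Real.log_pos (by exact_mod_cast hq))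
  have hrc : (t : ℝ) * Real.log q ≤ r * c := by
    calc (t : ℝ) * Real.log q = t * 2 ^ t * Real.log q * c := by
          simp only [c]; field_simp
      _ ≤ r * c := by gcongr
  have hr0 : r ≠ 0 := by
    rintro rfl
    rw [Nat.cast_zero, zero_mul] at hrc
    linarith
  have hnonneg : 0 ≤ 1 - c := sub_nonneg.2 (inv_le_one_of_one_le₀ (one_le_pow₀ one_le_two))
  have hexp : 1 - c < Real.exp (-c) := Real.one_sub_lt_exp_neg hc.ne'
  calc (q : ℝ) ^ t * (1 - c) ^ r < q ^ t * Real.exp (-c) ^ r := by gcongr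
    _ = Real.exp (t * Real.log q - r * c) := by
        rw [sub_eq_add_neg, Real.exp_add, Real.exp_nat_mul, Real.exp_log hq0, ← mul_neg,
          Real.exp_nat_mul]
    _ ≤ 1 := Real.exp_le_one_iff.mpr (by linarith)

theorem exists_forall_exists_isolates {t q r : ℕ} (ht : 1 ≤ t) (hq : 2 ≤ q)
    (hr : (t : ℝ) * 2 ^ t * Real.log q ≤ r) :
    ∃ X : Fin r → Fin q → Bool, ∀ (j : Fin t ↪o Fin q) (ℓ : Fin t), ∃ i, Isolates (X i) j ℓ := by
  by_contra! hfail
  let Fails (p : (Fin t ↪o Fin q) × Fin t) :=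
    {X : Fin r → Fin q → Bool // ∀ i, ¬Isolates (X i) p.1 p.2}
  have hcover : Surjective fun x : Σ p, Fails p => x.2.1 := fun X => by
    obtain ⟨j, ℓ, hX⟩ := hfail X
    exact ⟨⟨(j, ℓ), X, hX⟩, rfl⟩
  have hunion := Nat.card_le_card_of_surjective _ hcover
  rw [Nat.card_sigma] at hunion
  set c : ℝ := (2 ^ t)⁻¹
  have hc : 0 ≤ 1 - c := sub_nonneg.2 (inv_le_one_of_one_le₀ (one_le_pow₀ one_le_two))
  have hfails : ∀ p, (Nat.card (Fails p) : ℝ) ≤ ((2 : ℝ) ^ q * (1 - c)) ^ r := fun p => by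
    simpa only [Nat.card_fin] using card_forall_not_isolates_le (ρ := Fin r) p.1.injective p.2
  have hpairs : (Nat.card ((Fin t ↪o Fin q) × Fin t) : ℝ) ≤ q ^ t := by
    rw [Nat.card_prod, Nat.card_fin_orderEmbedding, Nat.card_fin]
    exact_mod_cast Nat.choose_mul_le_pow q t
  have : ((2 : ℝ) ^ q) ^ r < ((2 : ℝ) ^ q) ^ r :=
    calc ((2 : ℝ) ^ q) ^ r = Nat.card (Fin r → Fin q → Bool) := by simp
      _ ≤ ∑ p, (Nat.card (Fails p) : ℝ) := by exact_mod_cast hunion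
      _ ≤ ∑ _p, ((2 : ℝ) ^ q * (1 - c)) ^ r := Finset.sum_le_sum fun p _ => hfails p
      _ = Nat.card ((Fin t ↪o Fin q) × Fin t) * (1 - c) ^ r * ((2 : ℝ) ^ q) ^ r := by
        rw [Finset.sum_const, Finset.card_univ, ← Nat.card_eq_fintype_card, nsmul_eq_mul, mul_pow]
        ring
      _ ≤ q ^ t * (1 - c) ^ r * ((2 : ℝ) ^ q) ^ r := by gcongr
      _ < ((2 : ℝ) ^ q) ^ r := by
        rw [mul_lt_iff_lt_one_left (by positivity)]
        exact pow_mul_one_sub_inv_two_pow_pow_lt_one ht hq hr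
  exact this.false

theorem stmt0_general (t q r : ℕ) (ht : 1 ≤ t) (hq : 2 ≤ q)
    (hr : (t : ℝ) * 2 ^ t * Real.log q ≤ r) :
    0 < (PMF.uniformOfFintype (Fin r → Fin q → Bool)).toOuterMeasure
      { X | ∀ j : Fin t → Fin q, StrictMono j → ∀ ℓ : Fin t,
        ∃ i : Fin r, (∀ m : Fin t, m ≠ ℓ → X i (j m) = false) ∧ X i (j ℓ) = true } := by
  obtain ⟨X, hX⟩ := exists_forall_exists_isolates ht hq hr
  exact PMF.toOuterMeasure_uniformOfFintype_pos
    ⟨X, fun j hj ℓ => hX (OrderEmbedding.ofStrictMono j hj) ℓ⟩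

/-- Lemma 3.1: with positive probability, a random `r × q` binary matrix has,
for every increasing sequence of `t` columns and every distinguished position `ℓ`,
a row with a `1` in the distinguished column and `0` in the other `t-1` columns. -/
theorem stmt0 (t q r : ℕ) (ht : 1 ≤ t) (hq : 2 ≤ q) (htq : t ≤ q)
    (hr : (t : ℝ) * 2 ^ t * Real.log q ≤ r) :
    0 < (PMF.uniformOfFintype (Fin r → Fin q → Bool)).toOuterMeasure
      { X | ∀ j : Fin t → Fin q, StrictMono j → ∀ ℓ : Fin t,
        ∃ i : Fin r, (∀ m : Fin t, m ≠ ℓ → X i (j m) = false) ∧ X i (j ℓ) = true } :=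
  stmt0_general t q r ht hq hr
end

section
/- If P is an S_k-free poset (k ≥ 3) and Q is its Kimble split, then Q is S_k-free. -/
/-- A relation `r` is a linear extension of the partial order on `α`. -/
def IsLinExt {α : Type*} [Preorder α] (r : α → α → Prop) : Prop :=
  IsLinearOrder α r ∧ ∀ a b : α, a ≤ b → r a b

/-- A finite family of linear extensions whose intersection is the order. -/
def IsRealizer {α : Type*} [Preorder α] {d : ℕ} (L : Fin d → (α → α → Prop)) : Prop :=
  (∀ i, IsLinExt (L i)) ∧ ∀ a b : α, a ≤ b ↔ ∀ i, L i a b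

/-- Order dimension: minimum size of a realizer. -/
noncomputable def orderDim (α : Type*) [Preorder α] : ℕ :=
  sInf { d | ∃ L : Fin d → (α → α → Prop), IsRealizer L }

/-- `α` contains an induced copy of the standard example `S_k`. -/
def HasStdExample (α : Type*) [Preorder α] (k : ℕ) : Prop :=
  ∃ a b : Fin k → α,
    (∀ i j, a i ≤ a j ↔ i = j) ∧
    (∀ i j, b i ≤ b j ↔ i = j) ∧
    (∀ i j, a i ≤ b j ↔ i ≠ j) ∧
    (∀ i j, ¬ b i ≤ a j)

/-- `α` is `S_k`-free. -/
def SkFree (α : Type*) [Preorder α] (k : ℕ) : Prop := ¬ HasStdExample α k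

/-- `(A,B)` is a bipartition of the (height two) poset `α`. -/
def IsBipartition {α : Type*} [Preorder α] (A B : Set α) : Prop :=
  (∀ x, x ∈ A ∨ x ∈ B) ∧ (∀ x, ¬(x ∈ A ∧ x ∈ B)) ∧
  ∀ x y : α, x < y → x ∈ A ∧ y ∈ B

def Incomp {α : Type*} [Preorder α] (x y : α) : Prop := ¬ x ≤ y ∧ ¬ y ≤ x

def CriticalPair {α : Type*} [Preorder α] (x y : α) : Prop :=
  Incomp x y ∧ (∀ z, z < x → z < y) ∧ (∀ z, y < z → x < z)

/-- `b` is a mate of `s i` with respect to the subset enumerated by `s`. -/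
def IsMate {α : Type*} [Preorder α] {k : ℕ} (s : Fin k → α) (i : Fin k) (b : α) : Prop :=
  Incomp (s i) b ∧ ∀ j, j ≠ i → s j < b

def kimbleLE {α : Type*} [PartialOrder α] : α ⊕ α → α ⊕ α → Prop
  | .inl x, .inl y => x = y
  | .inl x, .inr y => x ≤ y
  | .inr _, .inl _ => False
  | .inr x, .inr y => x = y

/-- The Kimble split of a poset: two copies `x'` (inl) and `x''` (inr) of each
element, with `x' ≤ y''` iff `x ≤ y`, and no other nontrivial relations. -/
def kimblePO (α : Type*) [PartialOrder α] : PartialOrder (α ⊕ α) where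
  le := kimbleLE
  lt a b := kimbleLE a b ∧ ¬ kimbleLE b a
  lt_iff_le_not_ge _ _ := Iff.rfl
  le_refl x := by cases x <;> simp [kimbleLE]
  le_trans a b c hab hbc := by
    cases a <;> cases b <;> cases c <;> simp_all [kimbleLE]
    try exact le_trans hab hbc
  le_antisymm a b hab hba := by
    cases a <;> cases b <;> simp_all [kimbleLE]


/-!
In the Kimble split every `x''` is maximal and every `x'` minimal, whereas in a copy of `S_k`
(`k ≥ 2`) each `a i` lies strictly below some `b j` and each `b j` strictly above some `a i`.
Hence a copy of `S_k` in the split consists of primed `a`'s and double-primed `b`'s, and its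
cross relations `a i ≤ b j ↔ i ≠ j` hold verbatim in `P`. For `k ≥ 3` these cross relations
alone force all other relations of `S_k`, using a third index `l` as a detour.
-/

section StandardExample

variable {β : Type*} [Preorder β] {k : ℕ} {a b : Fin k → β}

lemma not_isMax_of_le_iff_ne (hk : 2 ≤ k) (hab : ∀ i j, a i ≤ b j ↔ i ≠ j)
    (hba : ∀ i j, ¬ b i ≤ a j) (i : Fin k) : ¬ IsMax (a i) := by
  have := Fin.nontrivial_iff_two_le.2 hk
  obtain ⟨l, hl⟩ := exists_ne i
  exact fun hmax => hba l i (hmax ((hab i l).2 hl.symm))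

lemma not_isMin_of_le_iff_ne (hk : 2 ≤ k) (hab : ∀ i j, a i ≤ b j ↔ i ≠ j)
    (hba : ∀ i j, ¬ b i ≤ a j) (j : Fin k) : ¬ IsMin (b j) := by
  have := Fin.nontrivial_iff_two_le.2 hk
  obtain ⟨l, hl⟩ := exists_ne j
  exact fun hmin => hba j l (hmin ((hab l j).2 hl))

lemma hasStdExample_of_le_iff_ne (hk : 3 ≤ k) (hab : ∀ i j, a i ≤ b j ↔ i ≠ j) :
    HasStdExample β k := by
  have hab_self (i : Fin k) : ¬ a i ≤ b i := fun h => (hab i i).1 h rfl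
  refine ⟨a, b, fun i j => ⟨fun hle => ?_, ?_⟩, fun i j => ⟨fun hle => ?_, ?_⟩, hab,
    fun i j hle => ?_⟩
  · by_contra hij
    exact hab_self i (hle.trans ((hab j i).2 (Ne.symm hij)))
  · rintro rfl; rfl
  · by_contra hij
    exact hab_self j (((hab j i).2 (Ne.symm hij)).trans hle)
  · rintro rfl; rfl
  · obtain ⟨l, hli, hlj⟩ := Fin.exists_ne_and_ne_of_two_lt i j hk
    exact hab_self l ((((hab l i).2 hli).trans hle).trans ((hab j l).2 (Ne.symm hlj)))

end StandardExample

section Kimble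

variable {α : Type*} [PartialOrder α]

lemma kimblePO_isMax_inr (x : α) : @IsMax (α ⊕ α) (kimblePO α).toLE (.inr x) := by
  rintro (y | y) h
  exacts [h.elim, show kimbleLE _ _ from h.symm]

lemma kimblePO_isMin_inl (x : α) : @IsMin (α ⊕ α) (kimblePO α).toLE (.inl x) := by
  rintro (y | y) h
  exacts [show kimbleLE _ _ from h.symm, h.elim]

lemma kimblePO_exists_inl_of_not_isMax {z : α ⊕ α} (hz : ¬ @IsMax _ (kimblePO α).toLE z) :
    ∃ x, z = .inl x := by
  rcases z with x | x
  · exact ⟨x, rfl⟩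
  · exact absurd (kimblePO_isMax_inr x) hz

lemma kimblePO_exists_inr_of_not_isMin {z : α ⊕ α} (hz : ¬ @IsMin _ (kimblePO α).toLE z) :
    ∃ y, z = .inr y := by
  rcases z with y | y
  · exact absurd (kimblePO_isMin_inl y) hz
  · exact ⟨y, rfl⟩

end Kimble

/-- Lemma 4.3: the Kimble split of an `S_k`-free poset is `S_k`-free. -/
theorem stmt2 (α : Type*) [PartialOrder α] (k : ℕ) (hk : 3 ≤ k)
    (h : SkFree α k) : @SkFree (α ⊕ α) (kimblePO α).toPreorder k := by
  let _ : Preorder (α ⊕ α) := (kimblePO α).toPreorder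
  rintro ⟨a, b, -, -, hab, hba⟩
  choose x hx using fun i =>
    kimblePO_exists_inl_of_not_isMax (not_isMax_of_le_iff_ne (by omega) hab hba i)
  choose y hy using fun j =>
    kimblePO_exists_inr_of_not_isMin (not_isMin_of_le_iff_ne (by omega) hab hba j)
  refine h (hasStdExample_of_le_iff_ne hk (a := x) (b := y) fun i j => ?_)
  rw [← hab i j, hx, hy]
  rfl
end

section
/- Let P be a poset and Q be its Kimble split. Then dim(P) ≤ dim(Q) ≤ dim(P) + 1. -/
/-!
For the lower bound, take a linear extension `l` of the Kimble split and give each `x` the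
weight `g x`, the number of elements lying `l`-below some `z'` with `z ≤ x`. Then
`rankBy l x' ≤ g x` and `g y ≤ rankBy l y''`, so ordering `P` by `g` (ties broken by any linear
extension) gives a linear extension in which `x` before `y` forces `x' < y''` in `l`. A realizer
of the split therefore yields a realizer of `P` of the same size.

For the upper bound, lift each extension `Lᵢ` of a realizer of `P` to the split by comparing the
underlying elements with `Lᵢ` and putting `x'` before `x''`, and add one extension listing every
`x'` before every `y''`, each copy ordered by a linear extension of the dual of `P`. The split is
exactly the set of pairs lying in all of these.
-/

section

variable {α β : Type*}

def lexComap (f : α → β) (r : β → β → Prop) (t : α → α → Prop) (a b : α) : Prop :=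
  r (f a) (f b) ∧ (f a = f b → t a b)

instance isLinearOrder_lexComap (f : α → β) (r : β → β → Prop) (t : α → α → Prop)
    [IsLinearOrder β r] [IsLinearOrder α t] : IsLinearOrder α (lexComap f r t) where
  refl a := ⟨refl _, fun _ => refl a⟩
  trans a b c hab hbc := by
    refine ⟨_root_.trans hab.1 hbc.1, fun hac => ?_⟩
    have hab' : f a = f b := antisymm hab.1 (hac ▸ hbc.1)
    exact _root_.trans (hab.2 hab') (hbc.2 (hab' ▸ hac))
  antisymm a b hab hba := antisymm (hab.2 (antisymm hab.1 hba.1)) (hba.2 (antisymm hba.1 hab.1))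
  total a b := by
    by_cases h : f a = f b
    · exact (total_of t a b).imp (fun hab => ⟨h ▸ refl _, fun _ => hab⟩)
        (fun hba => ⟨h ▸ refl _, fun _ => hba⟩)
    · exact (total_of r (f a) (f b)).imp (fun hab => ⟨hab, fun h' => (h h').elim⟩)
        (fun hba => ⟨hba, fun h' => (h h'.symm).elim⟩)

instance {r : α → α → Prop} {s : β → β → Prop} [IsLinearOrder α r] [IsLinearOrder β s] :
    IsLinearOrder (α ⊕ β) (Sum.Lex r s) where

section Rank

variable [Finite β] (r : β → β → Prop)

noncomputable def rankBy (b : β) : ℕ := {c | r c b}.ncard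

theorem rankBy_le_rankBy_iff [IsLinearOrder β r] {a b : β} :
    rankBy r a ≤ rankBy r b ↔ r a b := by
  refine ⟨fun h => ?_, fun hab => Set.ncard_le_ncard fun c hc => _root_.trans hc hab⟩
  by_contra hab
  have hba : r b a := (total_of r a b).resolve_left hab
  exact h.not_gt <| Set.ncard_lt_ncard
    ⟨fun c hc => _root_.trans hc hba, fun hsub => hab (hsub (refl_of r a))⟩

end Rank

section Realizer

variable [PartialOrder α]

theorem isRealizer_of_forall_iff {d : ℕ} {L : Fin d → α → α → Prop}
    (hlin : ∀ i, IsLinearOrder α (L i)) (hL : ∀ a b, a ≤ b ↔ ∀ i, L i a b) : IsRealizer L :=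
  ⟨fun i => ⟨hlin i, fun a b h => (hL a b).1 h i⟩, hL⟩

theorem orderDim_le {d : ℕ} {L : Fin d → α → α → Prop} (hL : IsRealizer L) : orderDim α ≤ d :=
  Nat.sInf_le ⟨L, hL⟩

variable (α) in
theorem exists_isLinExt : ∃ s : α → α → Prop, IsLinExt s :=
  extend_partialOrder (· ≤ ·)

theorem exists_isLinExt_of_not_le {x y : α} (hxy : ¬x ≤ y) :
    ∃ s : α → α → Prop, IsLinExt s ∧ s y x := by
  let r a b := a ≤ b ∨ (a ≤ y ∧ x ≤ b)
  have : IsPartialOrder α r :=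
    { refl := fun a => Or.inl le_rfl
      trans := by
        rintro a b c (hab | ⟨hay, hxb⟩) (hbc | ⟨hby, hxc⟩)
        exacts [Or.inl (hab.trans hbc), Or.inr ⟨hab.trans hby, hxc⟩, Or.inr ⟨hay, hxb.trans hbc⟩,
          (hxy (hxb.trans hby)).elim]
      antisymm := by
        rintro a b (hab | ⟨hay, hxb⟩) (hba | ⟨hby, hxa⟩)
        exacts [le_antisymm hab hba, (hxy (hxa.trans (hab.trans hby))).elim,
          (hxy (hxb.trans (hba.trans hay))).elim, (hxy (hxb.trans hby)).elim] }
  obtain ⟨s, hs, hrs⟩ := extend_partialOrder r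
  exact ⟨s, ⟨hs, fun a b h => hrs a b (Or.inl h)⟩, hrs y x (Or.inr ⟨le_rfl, le_rfl⟩)⟩

variable (α) in
theorem exists_isRealizer [Finite α] : ∃ (d : ℕ) (L : Fin d → α → α → Prop), IsRealizer L := by
  have h (p : α × α) : ∃ s : α → α → Prop, IsLinExt s ∧ (¬p.1 ≤ p.2 → s p.2 p.1) := by
    by_cases hp : p.1 ≤ p.2
    · obtain ⟨s, hs⟩ := exists_isLinExt α
      exact ⟨s, hs, fun h => (h hp).elim⟩
    · obtain ⟨s, hs, hyx⟩ := exists_isLinExt_of_not_le hp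
      exact ⟨s, hs, fun _ => hyx⟩
  choose s hs hswap using h
  obtain ⟨d, ⟨e⟩⟩ := Finite.exists_equiv_fin (α × α)
  refine ⟨d, fun i => s (e.symm i), isRealizer_of_forall_iff (fun i => (hs _).1) fun x y => ?_⟩
  refine ⟨fun h i => (hs _).2 x y h, fun h => by_contra fun hxy => hxy ?_⟩
  have := (hs (x, y)).1
  exact (antisymm (by simpa using h (e (x, y))) (hswap (x, y) hxy)).le

variable (α) in
theorem exists_isRealizer_orderDim [Finite α] :
    ∃ L : Fin (orderDim α) → α → α → Prop, IsRealizer L :=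
  Nat.sInf_mem (exists_isRealizer α)

end Realizer

theorem forall_lexComap_and_iff [LE α] {ι : Type*} {L : ι → α → α → Prop}
    (hL : ∀ x y, x ≤ y ↔ ∀ i, L i x y) (f : β → α) (t : β → β → Prop) {a b : β} :
    (∀ i, lexComap f (L i) t a b) ∧ t a b ↔ f a ≤ f b ∧ t a b := by
  rw [hL]
  exact ⟨fun h => ⟨fun i => (h.1 i).1, h.2⟩, fun h => ⟨fun i => ⟨h.1 i, fun _ => h.2⟩, h.2⟩⟩

section Kimble

variable [PartialOrder α]

theorem exists_isLinExt_of_isLinExt_kimble [Finite α] {l : α ⊕ α → α ⊕ α → Prop}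
    (hl : @IsLinExt _ (kimblePO α).toPreorder l) :
    ∃ s : α → α → Prop, IsLinExt s ∧ ∀ x y, s x y → l (.inl x) (.inr y) := by
  have := hl.1
  let g (x : α) : ℕ := {c | ∃ z ≤ x, l c (.inl z)}.ncard
  have g_mono {x y : α} (h : x ≤ y) : g x ≤ g y :=
    Set.ncard_le_ncard fun c ⟨z, hzx, hcz⟩ => ⟨z, hzx.trans h, hcz⟩
  have rankBy_inl_le (x : α) : rankBy l (.inl x) ≤ g x :=
    Set.ncard_le_ncard fun c hc => ⟨x, le_rfl, hc⟩
  have le_rankBy_inr (x : α) : g x ≤ rankBy l (.inr x) :=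
    Set.ncard_le_ncard fun c ⟨z, hzx, hcz⟩ => _root_.trans hcz (hl.2 (.inl z) (.inr x) hzx)
  obtain ⟨t, ht⟩ := exists_isLinExt α
  have := ht.1
  refine ⟨lexComap g (· ≤ ·) t, ⟨inferInstance, fun x y h => ⟨g_mono h, fun _ => ht.2 x y h⟩⟩,
    fun x y h => (rankBy_le_rankBy_iff l).1 ?_⟩
  exact (rankBy_inl_le x).trans (h.1.trans (le_rankBy_inr y))

theorem exists_isRealizer_of_kimble [Finite α] {d : ℕ} {L : Fin d → α ⊕ α → α ⊕ α → Prop}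
    (hL : @IsRealizer _ (kimblePO α).toPreorder d L) :
    ∃ M : Fin d → α → α → Prop, IsRealizer M := by
  choose M hM hML using fun i => exists_isLinExt_of_isLinExt_kimble (hL.1 i)
  refine ⟨M, isRealizer_of_forall_iff (fun i => (hM i).1) fun x y =>
    ⟨fun h i => (hM i).2 x y h, fun h => ?_⟩⟩
  exact (hL.2 (.inl x) (.inr y)).2 fun i => hML i x y (h i)

theorem kimbleLE_iff {t : α → α → Prop} [IsLinearOrder α t] (ht : ∀ x y : α, y ≤ x → t x y)
    {a b : α ⊕ α} : kimbleLE a b ↔ Sum.elim id id a ≤ Sum.elim id id b ∧ Sum.Lex t t a b := by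
  have eq_iff (x y : α) : x = y ↔ x ≤ y ∧ t x y :=
    ⟨by rintro rfl; exact ⟨le_rfl, refl x⟩, fun h => antisymm h.2 (ht y x h.1)⟩
  rcases a with x | x <;> rcases b with y | y <;> simp [kimbleLE, eq_iff]

theorem exists_isRealizer_kimble_succ {d : ℕ} {L : Fin d → α → α → Prop} (hL : IsRealizer L) :
    ∃ M : Fin (d + 1) → α ⊕ α → α ⊕ α → Prop, @IsRealizer _ (kimblePO α).toPreorder _ M := by
  obtain ⟨t, ht⟩ : ∃ t : α → α → Prop, IsLinearOrder α t ∧ ∀ x y : α, y ≤ x → t x y :=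
    exists_isLinExt αᵒᵈ
  have := ht.1
  let T := Sum.Lex t t
  let M : Fin (d + 1) → α ⊕ α → α ⊕ α → Prop :=
    Fin.snoc (α := fun _ => α ⊕ α → α ⊕ α → Prop) (fun i => lexComap (Sum.elim id id) (L i) T) T
  refine ⟨M, @isRealizer_of_forall_iff _ (kimblePO α) _ _ (fun i => ?_) fun a b => ?_⟩
  · induction i using Fin.lastCases with
    | last => simp only [M, Fin.snoc_last]; infer_instance
    | cast i =>
      have := (hL.1 i).1
      simp only [M, Fin.snoc_castSucc]; infer_instance
  · rw [Fin.forall_fin_succ']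
    simp only [M, Fin.snoc_castSucc, Fin.snoc_last]
    rw [forall_lexComap_and_iff hL.2]
    exact kimbleLE_iff ht.2

end Kimble

end

/-- Kimble's theorem: `dim(P) ≤ dim(Q) ≤ dim(P) + 1` where `Q` is the Kimble split. -/
theorem stmt3 (α : Type*) [Fintype α] [PartialOrder α] :
    orderDim α ≤ @orderDim (α ⊕ α) (kimblePO α).toPreorder ∧
    @orderDim (α ⊕ α) (kimblePO α).toPreorder ≤ orderDim α + 1 := by
  obtain ⟨L, hL⟩ := exists_isRealizer_orderDim α
  obtain ⟨M, hM⟩ := @exists_isRealizer_orderDim (α ⊕ α) (kimblePO α) _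
  obtain ⟨L', hL'⟩ := exists_isRealizer_of_kimble hM
  obtain ⟨M', hM'⟩ := exists_isRealizer_kimble_succ hL
  exact ⟨orderDim_le hL', @orderDim_le _ (kimblePO α) _ _ hM'⟩
end

section
/- A set of linear extensions of a finite poset P is a realizer of P if and only if it reverses every critical pair of P. -/
/-!
If `a` and `b` are incomparable, shrink `a` to a minimal `x ≤ a` with `x ≰ b`, then grow `b`
to a maximal `y ≥ b` with `x ≰ y`; the resulting `(x, y)` is a critical pair. A linear
extension reversing it has `x ≤ a`, `b ≤ y` and `y < x`, so it cannot put `a` below `b`.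
Hence a family reversing all critical pairs separates every incomparable pair, i.e. it is a
realizer; conversely a realizer must reverse each critical pair, being an incomparable pair.
-/

section CriticalPair

variable {α : Type*} [Preorder α]

theorem exists_minimal_le_not_le [WellFoundedLT α] {a b : α} (hab : ¬ a ≤ b) :
    ∃ x ≤ a, ¬ x ≤ b ∧ ∀ z < x, z ≤ b := by
  obtain ⟨x, ⟨hxa, hxb⟩, hmin⟩ :=
    wellFounded_lt.has_min {x | x ≤ a ∧ ¬ x ≤ b} ⟨a, le_rfl, hab⟩
  exact ⟨x, hxa, hxb, fun z hzx => by_contra fun hzb => hmin z ⟨hzx.le.trans hxa, hzb⟩ hzx⟩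

theorem exists_maximal_ge_not_le [WellFoundedGT α] {x b : α} (hxb : ¬ x ≤ b) :
    ∃ y, b ≤ y ∧ ¬ x ≤ y ∧ ∀ z, y < z → x ≤ z := by
  obtain ⟨y, ⟨hby, hxy⟩, hmax⟩ :=
    wellFounded_gt.has_min {y | b ≤ y ∧ ¬ x ≤ y} ⟨b, le_rfl, hxb⟩
  exact ⟨y, hby, hxy, fun z hyz => by_contra fun hxz => hmax z ⟨hby.trans hyz.le, hxz⟩ hyz⟩

theorem Incomp.exists_criticalPair [WellFoundedLT α] [WellFoundedGT α] {a b : α}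
    (h : Incomp a b) : ∃ x y, CriticalPair x y ∧ x ≤ a ∧ b ≤ y := by
  obtain ⟨x, hxa, hxb, hbelow⟩ := exists_minimal_le_not_le h.1
  obtain ⟨y, hby, hxy, habove⟩ := exists_maximal_ge_not_le hxb
  have hyx : ¬ y ≤ x := fun hyx => h.2 ((hby.trans hyx).trans hxa)
  refine ⟨x, y, ⟨⟨hxy, hyx⟩, fun z hzx => ?_, fun z hyz => ?_⟩, hxa, hby⟩
  · exact lt_of_le_not_ge ((hbelow z hzx).trans hby) fun hyz => hyx (hyz.trans hzx.le)
  · exact lt_of_le_not_ge (habove z hyz) fun hzx => hyx (hyz.le.trans hzx)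

end CriticalPair

section Realizer

variable {α : Type*} [Preorder α] {d : ℕ} {L : Fin d → (α → α → Prop)}

theorem exists_rel_swap_of_criticalPair (hL : ∀ i, IsLinExt (L i))
    (hreal : ∀ a b : α, a ≤ b ↔ ∀ i, L i a b) {x y : α} (hxy : CriticalPair x y) :
    ∃ i, L i y x := by
  obtain ⟨i, hi⟩ : ∃ i, ¬ L i x y := by simpa [hreal] using hxy.1.1
  have := (hL i).1
  exact ⟨i, (total_of (L i) x y).resolve_left hi⟩

theorem le_of_forall_rel_of_criticalPair_swap [WellFoundedLT α] [WellFoundedGT α]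
    (hd : 0 < d) (hL : ∀ i, IsLinExt (L i)) (hrev : ∀ x y : α, CriticalPair x y → ∃ i, L i y x)
    {a b : α} (hab : ∀ i, L i a b) : a ≤ b := by
  by_contra hnab
  by_cases hba : b ≤ a
  · have i : Fin d := ⟨0, hd⟩
    have := (hL i).1
    exact hnab (antisymm (r := L i) (hab i) ((hL i).2 b a hba) ▸ le_rfl)
  · obtain ⟨x, y, hxy, hxa, hby⟩ := Incomp.exists_criticalPair ⟨hnab, hba⟩
    obtain ⟨i, hyx⟩ := hrev x y hxy
    have := (hL i).1
    have hxy' : L i x y :=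
      _root_.trans (_root_.trans ((hL i).2 x a hxa) (hab i)) ((hL i).2 b y hby)
    exact hxy.1.1 (antisymm (r := L i) hxy' hyx ▸ le_rfl)

end Realizer

/-- A nonempty set of linear extensions of a finite poset is a realizer
iff it reverses every critical pair. -/
theorem stmt5 {α : Type*} [Fintype α] [PartialOrder α] {d : ℕ} (hd : 0 < d)
    (L : Fin d → (α → α → Prop)) (hL : ∀ i, IsLinExt (L i)) :
    (∀ a b : α, a ≤ b ↔ ∀ i, L i a b) ↔
      (∀ x y : α, CriticalPair x y → ∃ i, L i y x) :=
  ⟨fun hreal _ _ => exists_rel_swap_of_criticalPair hL hreal,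
    fun hrev _ _ =>
      ⟨fun hab i => (hL i).2 _ _ hab, le_of_forall_rel_of_criticalPair_swap hd hL hrev⟩⟩
end

section
/- Let k ≥ 3 be fixed. Let P be a bipartite S_k-free poset with bipartition (A,B), let Q = {a₁,...,a_q} ⊆ A with q ≥ 2 be a monochromatic set in an upset-based coloring of the k-subsets of A (indexed consistently with the order on A). Then there exists a set of at most 2·⌈k·2^k·ln q⌉ linear extensions of P that reverses every critical pair (aᵢ, b) with aᵢ ∈ Q and b ∈ B. -/
/-!
For `b ∈ B` incomparable to `aᵢ`, let `D⁻` and `D⁺` be the sets of indices `j < i`, resp. `j > i`,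
with `aⱼ < b`. If `|D⁻| ≥ c` and `|D⁺| ≥ k - 1 - c`, then `c` elements of `D⁻`, the index `i` and
`k - 1 - c` elements of `D⁺` index a `k`-subset of `Q`, of colour `c`, whose element in position
`c` is `aᵢ` and has `b` as a mate; the colouring forbids this. Hence `|D⁻| < k` or `|D⁺| < k`.

By counting, some `t = ⌈k 2^k ln q⌉` subsets `X` of `[q]` separate every `F` with `|F| < k` from
every `i ∉ F` (that is, `F ⊆ X` and `i ∉ X`): a uniformly random `X` separates a given pair with
probability at least `2^{-k}`, there are at most `q^k` pairs, and `q^k (1 - 2^{-k})^t < 1`.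
Each `X` yields two linear extensions: rank the indices with those in `X` first and the others in
decreasing (resp. increasing) order, put each element of `A` at the rank of its index and each
element of `B` just above the highest rank below it. Then `b` precedes `aᵢ` as soon as
`i ∉ X ⊇ D⁻` (resp. `D⁺`).
-/

open Finset

section SeparatingFamily

variable {β : Type*} [Fintype β] [DecidableEq β]

theorem two_pow_card_le_card_filter_subset_notMem_mul {F : Finset β} {i : β} {k : ℕ}
    (hF : #F < k) (hi : i ∉ F) :
    2 ^ Fintype.card β ≤ #{X : Finset β | F ⊆ X ∧ i ∉ X} * 2 ^ k := by
  have hIcc : ({X : Finset β | F ⊆ X ∧ i ∉ X} : Finset _) = Icc F (univ.erase i) := by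
    ext X
    simp [subset_erase]
  rw [hIcc, card_Icc_finset (subset_erase.2 ⟨subset_univ F, hi⟩), card_erase_of_mem (mem_univ i),
    card_univ, ← pow_add]
  exact Nat.pow_le_pow_right two_pos (by omega)

theorem card_filter_not_subset_notMem_le {F : Finset β} {i : β} {k : ℕ} (hF : #F < k)
    (hi : i ∉ F) :
    (#{X : Finset β | ¬(F ⊆ X ∧ i ∉ X)} : ℝ) ≤ 2 ^ Fintype.card β * (1 - (2 ^ k)⁻¹) := by
  have hsplit : (#{X : Finset β | F ⊆ X ∧ i ∉ X} : ℝ) + #{X : Finset β | ¬(F ⊆ X ∧ i ∉ X)} =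
      2 ^ Fintype.card β := by
    exact_mod_cast (card_filter_add_card_filter_not (s := univ) _).trans
      (by rw [card_univ, Fintype.card_finset])
  have hgood : (2 : ℝ) ^ Fintype.card β * (2 ^ k)⁻¹ ≤ #{X : Finset β | F ⊆ X ∧ i ∉ X} := by
    rw [← div_eq_mul_inv, div_le_iff₀ (by positivity)]
    exact_mod_cast two_pow_card_le_card_filter_subset_notMem_mul hF hi
  rw [mul_sub, mul_one]
  linarith

theorem card_filter_card_lt_notMem_le (k : ℕ) :
    #{p : Finset β × β | #p.1 < k ∧ p.2 ∉ p.1} ≤ Fintype.card β ^ k := by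
  rw [← Fintype.card_subtype, ← card_vector]
  -- `(F, i) ↦ i :: F ++ [i, …, i]` of length `k`: `i` is the head and `F` the other entries.
  refine Fintype.card_le_of_injective
    (fun p => ⟨p.1.2 :: (p.1.1.toList ++ List.replicate (k - 1 - #p.1.1) p.1.2), by
      simp only [List.length_cons, List.length_append, length_toList, List.length_replicate]
      omega⟩) ?_
  have hdecode : ∀ (F : Finset β) (i : β) (m : ℕ), i ∉ F →
      (F.toList ++ List.replicate m i).toFinset.erase i = F := by
    intro F i m hi
    ext x
    by_cases hx : x = i <;> simp_all [List.mem_replicate]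
  rintro ⟨⟨F, i⟩, _, hi⟩ ⟨⟨F', i'⟩, _, hi'⟩ hFi
  obtain ⟨rfl, htail⟩ := List.cons_eq_cons.1 (congrArg Subtype.val hFi)
  obtain rfl : F = F' := by rw [← hdecode F i _ hi, ← hdecode F' i _ hi', htail]
  rfl

theorem exists_separating_family (k t : ℕ)
    (h : (Fintype.card β : ℝ) ^ k * (1 - (2 ^ k)⁻¹) ^ t < 1) :
    ∃ X : Fin t → Finset β, ∀ F : Finset β, #F < k → ∀ i ∉ F, ∃ m, F ⊆ X m ∧ i ∉ X m := by
  by_contra! hfail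
  set n := Fintype.card β
  set R : Finset (Finset β × β) := {p | #p.1 < k ∧ p.2 ∉ p.1}
  set bad : Finset β × β → Finset (Finset β) := fun p => {X | ¬(p.1 ⊆ X ∧ p.2 ∉ X)}
  have hcover : (univ : Finset (Fin t → Finset β)) ⊆
      R.biUnion fun p => Fintype.piFinset fun _ => bad p := by
    intro X _
    obtain ⟨F, hFk, i, hi, hX⟩ := hfail X
    simp only [mem_biUnion, Fintype.mem_piFinset, R, bad, mem_filter, mem_univ, true_and]
    exact ⟨(F, i), ⟨hFk, hi⟩, fun m hm => hm.2 (hX m hm.1)⟩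
  have hbad : ∀ p ∈ R, (#(bad p) : ℝ) ≤ 2 ^ n * (1 - (2 ^ k)⁻¹) := fun p hp =>
    card_filter_not_subset_notMem_le (mem_filter.1 hp).2.1 (mem_filter.1 hp).2.2
  have hR : (#R : ℝ) ≤ n ^ k := by exact_mod_cast card_filter_card_lt_notMem_le k
  have hx : (0 : ℝ) ≤ 1 - (2 ^ k)⁻¹ :=
    sub_nonneg.2 (inv_le_one_of_one_le₀ (one_le_pow₀ one_le_two))
  have := calc ((2 : ℝ) ^ n) ^ t = #(univ : Finset (Fin t → Finset β)) := by simp [n]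
    _ ≤ #(R.biUnion fun p => Fintype.piFinset fun _ => bad p) := by
        exact_mod_cast card_le_card hcover
    _ ≤ ∑ p ∈ R, (#(Fintype.piFinset fun _ : Fin t => bad p) : ℝ) := by
        exact_mod_cast card_biUnion_le
    _ = ∑ p ∈ R, (#(bad p) : ℝ) ^ t := by simp
    _ ≤ ∑ p ∈ R, (2 ^ n * (1 - (2 ^ k)⁻¹)) ^ t :=
        sum_le_sum fun p hp => pow_le_pow_left₀ (Nat.cast_nonneg _) (hbad p hp) t
    _ = #R * (1 - (2 ^ k)⁻¹) ^ t * (2 ^ n) ^ t := by rw [sum_const, nsmul_eq_mul, mul_pow]; ring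
    _ ≤ n ^ k * (1 - (2 ^ k)⁻¹) ^ t * (2 ^ n) ^ t := by gcongr
    _ < 1 * (2 ^ n) ^ t := by gcongr
  linarith

end SeparatingFamily

theorem pow_mul_one_sub_inv_two_pow_pow_lt_one_s9 {n k : ℕ} (hn : 2 ≤ n) (hk : 0 < k) :
    (n : ℝ) ^ k * (1 - (2 ^ k)⁻¹) ^ ⌈(k : ℝ) * 2 ^ k * Real.log n⌉₊ < 1 := by
  set t := ⌈(k : ℝ) * 2 ^ k * Real.log n⌉₊
  set x : ℝ := (2 ^ k)⁻¹
  have hx : 0 < x := by positivity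
  have hx1 : x ≤ 1 := inv_le_one_of_one_le₀ (one_le_pow₀ one_le_two)
  have hlog : 0 < Real.log n := Real.log_pos (by exact_mod_cast hn)
  have ht : 0 < t := Nat.ceil_pos.2 (by positivity)
  have hkt : k * Real.log n ≤ t * x := by
    rw [← div_eq_mul_inv, le_div_iff₀ (by positivity)]
    linarith [Nat.le_ceil ((k : ℝ) * 2 ^ k * Real.log n)]
  calc (n : ℝ) ^ k * (1 - x) ^ t < Real.exp (Real.log n) ^ k * Real.exp (-x) ^ t := by
        rw [Real.exp_log (by positivity)]
        gcongr
        exact Real.one_sub_lt_exp_neg hx.ne'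
    _ = Real.exp (k * Real.log n - t * x) := by
        rw [← Real.exp_nat_mul, ← Real.exp_nat_mul, ← Real.exp_add]
        ring_nf
    _ ≤ 1 := Real.exp_le_one_iff.2 (by linarith)

theorem Finset.card_filter_lt_orderEmbOfFin {β : Type*} [LinearOrder β] {s : Finset β} {k : ℕ}
    (h : #s = k) (p : Fin k) : #{y ∈ s | y < s.orderEmbOfFin h p} = p := by
  have hIio : {y ∈ s | y < s.orderEmbOfFin h p} = (Iio p).map (s.orderEmbOfFin h).toEmbedding := by
    ext y
    simp only [mem_filter, mem_map, mem_Iio, RelEmbedding.coe_toEmbedding]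
    constructor
    · rintro ⟨hy, hlt⟩
      obtain ⟨r, rfl⟩ : y ∈ Set.range (s.orderEmbOfFin h) := by rwa [range_orderEmbOfFin]
      exact ⟨r, (s.orderEmbOfFin h).lt_iff_lt.1 hlt, rfl⟩
    · rintro ⟨r, hr, rfl⟩
      exact ⟨orderEmbOfFin_mem s h r, (s.orderEmbOfFin h).lt_iff_lt.2 hr⟩
  rw [hIio, card_map, Fin.card_Iio]

theorem exists_orderEmbedding_apply_eq {β : Type*} [LinearOrder β] {E₁ E₂ : Finset β} {x : β}
    {k : ℕ} {c : Fin k} (h₁ : ∀ y ∈ E₁, y < x) (h₂ : ∀ y ∈ E₂, x < y) (hc₁ : #E₁ = c)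
    (hc₂ : #E₂ = k - 1 - c) :
    ∃ m : Fin k ↪o β, m c = x ∧ ∀ j, m j ∈ E₁ ∪ insert x E₂ := by
  have hxE₂ : x ∉ E₂ := fun hx => lt_irrefl x (h₂ x hx)
  have hdisj : Disjoint E₁ (insert x E₂) := by
    refine disjoint_left.2 fun y hy₁ hy => ?_
    rcases mem_insert.1 hy with rfl | hy₂
    · exact lt_irrefl y (h₁ y hy₁)
    · exact lt_asymm (h₁ y hy₁) (h₂ y hy₂)
  have hS : #(E₁ ∪ insert x E₂) = k := by
    rw [card_union_of_disjoint hdisj, card_insert_of_notMem hxE₂, hc₁, hc₂]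
    omega
  set m := (E₁ ∪ insert x E₂).orderEmbOfFin hS
  obtain ⟨p, hp⟩ : x ∈ Set.range m := by simp [m]
  have hbelow : {y ∈ E₁ ∪ insert x E₂ | y < x} = E₁ := by
    ext y
    simp only [mem_filter, mem_union, mem_insert]
    constructor
    · rintro ⟨hy | rfl | hy, hyx⟩
      · exact hy
      · exact absurd hyx (lt_irrefl y)
      · exact absurd hyx (h₂ y hy).asymm
    · exact fun hy => ⟨Or.inl hy, h₁ y hy⟩
  have hpc := card_filter_lt_orderEmbOfFin hS p
  rw [hp, hbelow, hc₁] at hpc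
  exact ⟨m, Fin.ext hpc.symm ▸ hp, orderEmbOfFin_mem _ hS⟩

section Poset

variable {α : Type*} [PartialOrder α]

open Classical in
theorem card_lt_or_card_lt_of_forall_not_isMate {q k : ℕ} {a : Fin q → α} {c : Fin k} {b : α}
    (hmate : ∀ m : Fin k → Fin q, StrictMono m → ¬IsMate (a ∘ m) c b) {i : Fin q}
    (hi : Incomp (a i) b) :
    #{j | a j < b ∧ j < i} < c ∨ #{j | a j < b ∧ i < j} < k - 1 - c := by
  by_contra! h
  obtain ⟨E₁, hE₁, hcard₁⟩ := exists_subset_card_eq h.1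
  obtain ⟨E₂, hE₂, hcard₂⟩ := exists_subset_card_eq h.2
  replace hE₁ : ∀ j ∈ E₁, a j < b ∧ j < i := fun j hj => (mem_filter.1 (hE₁ hj)).2
  replace hE₂ : ∀ j ∈ E₂, a j < b ∧ i < j := fun j hj => (mem_filter.1 (hE₂ hj)).2
  obtain ⟨m, hmc, hmem⟩ := exists_orderEmbedding_apply_eq (fun j hj => (hE₁ j hj).2)
    (fun j hj => (hE₂ j hj).2) hcard₁ hcard₂
  refine hmate m m.strictMono ⟨by simpa [hmc] using hi, fun j hj => ?_⟩
  have hne : m j ≠ i := hmc ▸ fun h => hj (m.injective h)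
  rcases mem_union.1 (hmem j) with hj₁ | hj₂
  · exact (hE₁ _ hj₁).1
  · exact (hE₂ _ ((mem_insert.1 hj₂).resolve_left hne)).1

variable [Fintype α]

theorem exists_isLinExt_of_strictMono (key : α → ℕ) (hkey : StrictMono key) :
    ∃ L : α → α → Prop, IsLinExt L ∧ ∀ x y, key x < key y → L x y := by
  let e : α → ℕ ×ₗ Fin (Fintype.card α) := fun x => toLex (key x, Fintype.equivFin α x)
  have he : Function.Injective e := fun x y hxy =>
    (Fintype.equivFin α).injective (congrArg Prod.snd (toLex.injective hxy))
  have hlin : IsLinearOrder α fun x y => e x ≤ e y :=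
    { refl := fun _ => le_rfl
      trans := fun _ _ _ => le_trans
      antisymm := fun _ _ hxy hyx => he (le_antisymm hxy hyx)
      total := fun _ _ => le_total _ _ }
  have hlt : ∀ x y, key x < key y → e x < e y := fun x y h => Prod.Lex.toLex_lt_toLex.2 (Or.inl h)
  refine ⟨fun x y => e x ≤ e y, ⟨hlin, fun x y hxy => ?_⟩, fun x y h => (hlt x y h).le⟩
  rcases hxy.eq_or_lt with rfl | hxy
  · exact le_rfl
  · exact (hlt x y (hkey hxy)).le

theorem exists_isLinExt_reversing {ι : Type*} [Fintype ι] {A B : Set α}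
    (hbip : IsBipartition A B) {a : ι → α} (haA : ∀ i, a i ∈ A) (f : ι → ℕ) :
    ∃ L : α → α → Prop, IsLinExt L ∧
      ∀ i b, b ∉ A → (∀ j, a j < b → f j < f i) → L b (a i) := by
  classical
  let ρ : α → ℕ := fun x => ({j | a j = x} : Finset ι).sup (f · + 1)
  let σ : α → ℕ := fun x => ({j | a j < x} : Finset ι).sup (f · + 1)
  let key : α → ℕ := fun x => if x ∈ A then 2 * ρ x else 2 * σ x + 1
  have hkey : StrictMono key := by
    intro x y hxy
    obtain ⟨hxA, hyB⟩ := hbip.2.2 x y hxy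
    have hyA : y ∉ A := fun hyA => hbip.2.1 y ⟨hyA, hyB⟩
    have hρσ : ρ x ≤ σ y := sup_mono fun j hj => by
      simp only [mem_filter, mem_univ, true_and] at hj ⊢
      exact hj ▸ hxy
    simp only [key, if_pos hxA, if_neg hyA]
    omega
  obtain ⟨L, hL, hLkey⟩ := exists_isLinExt_of_strictMono key hkey
  refine ⟨L, hL, fun i b hbA hb => hLkey _ _ ?_⟩
  have hσ : σ b ≤ f i := Finset.sup_le fun j hj => hb j (mem_filter.1 hj).2
  have hρ : f i + 1 ≤ ρ (a i) := le_sup (f := (f · + 1)) (by simp)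
  simp only [key, if_pos (haA i), if_neg hbA]
  omega

theorem exists_isLinExt_reversing_of_notMem {ι : Type*} [Fintype ι] {A B : Set α}
    (hbip : IsBipartition A B) {a : ι → α} (haA : ∀ i, a i ∈ A) (X : Finset ι) {n : ℕ}
    (g : ι → Fin n) :
    ∃ L : α → α → Prop, IsLinExt L ∧
      ∀ i b, b ∉ A → i ∉ X → (∀ j, a j < b → j ∈ X ∨ g j < g i) → L b (a i) := by
  classical
  obtain ⟨L, hL, hrev⟩ := exists_isLinExt_reversing hbip haA fun j => (if j ∈ X then 0 else n) + g j
  refine ⟨L, hL, fun i b hbA hiX hb => hrev i b hbA fun j hj => ?_⟩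
  have := (g j).isLt
  rcases hb j hj with hjX | hg <;> split_ifs <;> omega

end Poset

theorem stmt9_general {α : Type*} [Fintype α] [PartialOrder α] {k q : ℕ}
    (hq : 2 ≤ q)
    (A B : Set α) (hbip : IsBipartition A B)
    (lo : α → α → Prop)
    (χ : (Fin k → α) → Fin k)
    (hχ : ∀ s : Fin k → α, (∀ i j : Fin k, i < j → lo (s i) (s j)) →
      (∀ i, s i ∈ A) → ¬ ∃ b ∈ B, IsMate s (χ s) b)
    (a : Fin q → α) (haA : ∀ i, a i ∈ A)
    (hamono : ∀ i j : Fin q, i < j → lo (a i) (a j))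
    (c : Fin k)
    (hmonochrom : ∀ s : Fin k → α, (∀ i j : Fin k, i < j → lo (s i) (s j)) →
      (∀ i, ∃ m, s i = a m) → χ s = c) :
    ∃ d ≤ 2 * ⌈(k : ℝ) * 2 ^ k * Real.log q⌉₊,
      ∃ L : Fin d → (α → α → Prop), (∀ i, IsLinExt (L i)) ∧
        ∀ (i : Fin q) (b : α), b ∈ B → CriticalPair (a i) b → ∃ m, L m b (a i) := by
  classical
  set t := ⌈(k : ℝ) * 2 ^ k * Real.log q⌉₊
  obtain ⟨X, hX⟩ := exists_separating_family (β := Fin q) k t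
    (by simpa using pow_mul_one_sub_inv_two_pow_pow_lt_one_s9 hq c.pos)
  choose Ldec hLdec hrevdec using
    fun m => exists_isLinExt_reversing_of_notMem hbip haA (X m) Fin.rev
  choose Linc hLinc hrevinc using fun m => exists_isLinExt_reversing_of_notMem hbip haA (X m) id
  refine ⟨t + t, by omega, Fin.append Ldec Linc,
    Fin.addCases (fun m => (Fin.append_left Ldec Linc m).symm ▸ hLdec m)
      (fun m => (Fin.append_right Ldec Linc m).symm ▸ hLinc m), ?_⟩
  intro i b hbB hcp
  have hbA : b ∉ A := fun hbA => hbip.2.1 b ⟨hbA, hbB⟩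
  have hmate : ∀ m : Fin k → Fin q, StrictMono m → ¬IsMate (a ∘ m) c b := fun m hm hbm =>
    have hs : ∀ i j, i < j → lo (a (m i)) (a (m j)) := fun i j hij => hamono _ _ (hm hij)
    hχ _ hs (fun j => haA _) ⟨b, hbB, hmonochrom _ hs (fun j => ⟨m j, rfl⟩) ▸ hbm⟩
  have hne : ∀ j, a j < b → j ≠ i := fun j hj hji => hcp.1.1 (hji ▸ hj.le)
  have hck := c.isLt
  rcases card_lt_or_card_lt_of_forall_not_isMate hmate hcp.1 with h | h
  · obtain ⟨m, hFX, hiX⟩ := hX {j | a j < b ∧ j < i} (by omega) i (by simp)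
    refine ⟨Fin.castAdd t m, (Fin.append_left Ldec Linc m).symm ▸ hrevdec m i b hbA hiX ?_⟩
    exact fun j hj => (hne j hj).lt_or_gt.imp (fun hji => hFX (by simp [hj, hji])) Fin.rev_lt_rev.2
  · obtain ⟨m, hFX, hiX⟩ := hX {j | a j < b ∧ i < j} (by omega) i (by simp)
    refine ⟨Fin.natAdd t m, (Fin.append_right Ldec Linc m).symm ▸ hrevinc m i b hbA hiX ?_⟩
    exact fun j hj => (hne j hj).lt_or_gt.symm.imp (fun hij => hFX (by simp [hj, hij])) id

/-- Lemma 3.2: given a monochromatic set `Q = {a₁,…,a_q}` in a UB-coloring,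
there is a set of at most `2⌈k·2^k·ln q⌉` linear extensions reversing every
critical pair `(aᵢ, b)` with `b ∈ B`. -/
theorem stmt9 {α : Type*} [Fintype α] [PartialOrder α] {k q : ℕ}
    (hk : 3 ≤ k) (hq : 2 ≤ q)
    (A B : Set α) (hbip : IsBipartition A B) (hfree : SkFree α k)
    (lo : α → α → Prop) (hlo : IsStrictTotalOrder α lo)
    (χ : (Fin k → α) → Fin k)
    (hχ : ∀ s : Fin k → α, (∀ i j : Fin k, i < j → lo (s i) (s j)) →
      (∀ i, s i ∈ A) → ¬ ∃ b ∈ B, IsMate s (χ s) b)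
    (a : Fin q → α) (haA : ∀ i, a i ∈ A)
    (hamono : ∀ i j : Fin q, i < j → lo (a i) (a j))
    (c : Fin k)
    (hmonochrom : ∀ s : Fin k → α, (∀ i j : Fin k, i < j → lo (s i) (s j)) →
      (∀ i, ∃ m, s i = a m) → χ s = c) :
    ∃ d ≤ 2 * ⌈(k : ℝ) * 2 ^ k * Real.log q⌉₊,
      ∃ L : Fin d → (α → α → Prop), (∀ i, IsLinExt (L i)) ∧
        ∀ (i : Fin q) (b : α), b ∈ B → CriticalPair (a i) b → ∃ m, L m b (a i) :=
  stmt9_general hq A B hbip lo χ hχ a haA hamono c hmonochrom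
end
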